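/- Let s be a prime power and α a positive integer. If there exists an α-resolvable orthogonal array ROA(n2, m2, s, 2; α) with m2 = n2·(1 − 1/(αs))/(s−1), then for every positive integer k there exists an α-resolvable orthogonal array ROA(n2·s^k, m, s, 2; α) with m = n2·s^k·(1 − 1/(αs))/(s−1). -/

import Mathlib

/-!
Take the Kronecker sum of `M` with the multiplication table `D u v = u v` of `GF(s)`, which is a
difference scheme: for `v ≠ v'` the map `u ↦ u v - u v'` is a bijection. The sum of an
`OA(n, m, s, 2)` with balanced columns and a difference scheme is an `OA(ns, ms, s, 2)`.
Stacking its `s` copies `M + u v` one below the other, every resolution block of `a s` rows lies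
in one copy, where adding the constant `u v` to a column keeps it balanced; so the result is again
`a`-resolvable. Iterating `k` times multiplies `n` and `m` by `s ^ k`, which preserves
`m (a s) (s - 1) = n (a s - 1)`.
-/

open Finset

/-- `M` (rows indexed by `R`, columns by `C`, entries in the finite field `F` with
`s = Fintype.card F` elements) is an orthogonal array of strength `t`: for any choice of `t`
distinct columns and any `t`-tuple of symbols, the number of rows showing that tuple, times
`s ^ t`, equals the number of rows (i.e. each tuple appears exactly `(card R) / s ^ t` times). -/
def IsOA {R C F : Type*} [Fintype R] [Fintype F] [DecidableEq F]
    (M : R → C → F) (t : ℕ) : Prop :=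
  ∀ cols : Fin t → C, Function.Injective cols → ∀ v : Fin t → F,
    (Finset.univ.filter fun r : R => ∀ j, M r (cols j) = v j).card
      * Fintype.card F ^ t = Fintype.card R

/-- A vector over `F` is balanced if every symbol of `F` occurs equally often among its
entries. -/
def IsBalanced {R F : Type*} [Fintype R] [Fintype F] [DecidableEq F] (v : R → F) : Prop :=
  ∀ x : F, (Finset.univ.filter fun r : R => v r = x).card * Fintype.card F = Fintype.card R

/-- `M` is a difference scheme: for any two distinct columns, the vector of entrywise
differences contains every element of `F` equally often. -/
def IsDiffScheme {R C F : Type*} [Fintype R] [Field F] [Fintype F] [DecidableEq F]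
    (M : R → C → F) : Prop :=
  ∀ j j' : C, j ≠ j' → ∀ x : F,
    (Finset.univ.filter fun r : R => M r j - M r j' = x).card * Fintype.card F
      = Fintype.card R
/-- `M` is an `α`-resolvable orthogonal array `ROA(n, m, s, 2; a)`: it is an
`OA(n, m, s, 2)`, `a·s` divides `n`, and in each of the `n/(a·s)` consecutive blocks of
`a·s` rows (row `r` lies in block `⌊r/(a·s)⌋`) every column contains every symbol exactly
`a` times (i.e. each block is an `OA(a·s, m, s, 1)`). -/
def IsROA {F : Type} [Fintype F] [DecidableEq F] {n m : ℕ}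
    (M : Fin n → Fin m → F) (a : ℕ) : Prop :=
  IsOA M 2 ∧ (a * Fintype.card F ∣ n) ∧
    ∀ (k : ℕ) (l : Fin m) (x : F), (k + 1) * (a * Fintype.card F) ≤ n →
      (Finset.univ.filter fun r : Fin n =>
        (r : ℕ) / (a * Fintype.card F) = k ∧ M r l = x).card = a

theorem card_filter_univ_prod {α β : Type*} [Fintype α] [Fintype β] (p : α × β → Prop)
    [DecidablePred p] :
    #{x | p x} = ∑ u, #{r | p (u, r)} := by
  simp only [card_filter, Fintype.sum_prod_type]

section OrthogonalArray

variable {R C F : Type*} [Fintype R] [Fintype F] [DecidableEq F]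

theorem isOA_two_iff {M : R → C → F} :
    IsOA M 2 ↔ ∀ c c', c ≠ c' → ∀ x y,
      #{r | M r c = x ∧ M r c' = y} * Fintype.card F ^ 2 = Fintype.card R := by
  constructor
  · intro hM c c' hcc' x y
    have hinj : Function.Injective ![c, c'] := by
      intro i j hij
      fin_cases i <;> fin_cases j <;> simp_all [eq_comm]
    simpa [Fin.forall_fin_two] using hM ![c, c'] hinj ![x, y]
  · intro hM cols hinj v
    simpa [Fin.forall_fin_two] using
      hM (cols 0) (cols 1) (hinj.ne Fin.zero_ne_one) (v 0) (v 1)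

theorem IsOA.comp_equiv {R' C' : Type*} [Fintype R'] {M : R → C → F} {t : ℕ}
    (hM : IsOA M t) (e : R' ≃ R) (f : C' ≃ C) :
    IsOA (fun r c => M (e r) (f c)) t := by
  intro cols hinj v
  rw [Fintype.card_congr e, ← hM (f ∘ cols) (f.injective.comp hinj) v]
  congr 1
  exact card_equiv e (by simp)

/-- The Kronecker sum `M ⊕ D`: the block in block-row `u` and block-column `v` is
`M + D u v`. -/
def kronSum {ι κ : Type*} [Add F] (M : R → C → F) (D : ι → κ → F) : ι × R → κ × C → F :=
  fun p q => M p.2 q.2 + D p.1 q.1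

variable [Field F]

theorem isDiffScheme_mul : IsDiffScheme fun u v : F => u * v := by
  intro v v' hv x
  have hsub : v - v' ≠ 0 := sub_ne_zero.mpr hv
  have : ({u | u * v - u * v' = x} : Finset F) = {x / (v - v')} := by
    ext u
    simp [← mul_sub, eq_div_iff hsub]
  simp [this]

theorem IsOA.kronSum {ι κ : Type*} [Fintype ι] {M : R → C → F} {D : ι → κ → F}
    (hM : IsOA M 2) (hbal : ∀ c, IsBalanced fun r => M r c) (hD : IsDiffScheme D) :
    IsOA (kronSum M D) 2 := by
  rw [isOA_two_iff] at hM ⊢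
  rintro ⟨v, c⟩ ⟨v', c'⟩ hne x y
  rw [card_filter_univ_prod, Fintype.card_prod]
  simp only [_root_.kronSum]
  by_cases hc : c = c'
  · subst hc
    have hv : v ≠ v' := fun h => hne (by rw [h])
    have key : ∀ u, #{r | M r c + D u v = x ∧ M r c + D u v' = y} * Fintype.card F
        = if D u v - D u v' = x - y then Fintype.card R else 0 := by
      intro u
      split_ifs with hdiff
      · rw [← hbal c (x - D u v)]
        congr 2
        ext r
        simp only [mem_filter, mem_univ, true_and]
        constructor
        · rintro ⟨h, -⟩
          exact eq_sub_of_add_eq h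
        · intro h
          exact ⟨by linear_combination h, by linear_combination h - hdiff⟩
      · rw [mul_eq_zero, card_eq_zero, filter_eq_empty_iff]
        refine Or.inl fun r _ ⟨h, h'⟩ => hdiff ?_
        linear_combination h - h'
    calc (∑ u, #{r | M r c + D u v = x ∧ M r c + D u v' = y}) * Fintype.card F ^ 2
        = (∑ u, if D u v - D u v' = x - y then Fintype.card R else 0) * Fintype.card F := by
          rw [sq, ← mul_assoc, sum_mul]
          simp only [key]
      _ = Fintype.card ι * Fintype.card R := by
          rw [sum_ite, sum_const_zero, add_zero, sum_const, smul_eq_mul, mul_right_comm,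
            hD v v' hv (x - y)]
  · calc (∑ u, #{r | M r c + D u v = x ∧ M r c' + D u v' = y}) * Fintype.card F ^ 2
        = ∑ u : ι, #{r | M r c = x - D u v ∧ M r c' = y - D u v'} * Fintype.card F ^ 2 := by
          simp only [sum_mul, eq_sub_iff_add_eq]
      _ = Fintype.card ι * Fintype.card R := by
          simp [hM c c' hc]

end OrthogonalArray

theorem Nat.add_mul_div_eq_iff {b t n r u k : ℕ} (hb : 0 < b) (hn : n = b * t) (hr : r < n) :
    (r + n * u) / b = k ↔ u = k / t ∧ r / b = k % t := by
  subst hn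
  have ht : 0 < t := Nat.pos_of_mul_pos_left (Nat.zero_lt_of_lt hr)
  rw [mul_assoc, Nat.add_mul_div_left r _ hb, eq_comm (a := u), eq_comm (a := r / b),
    Nat.div_mod_unique ht]
  exact ⟨fun h => ⟨h, Nat.div_lt_of_lt_mul hr⟩, And.left⟩

/-- Index `i` of `Fin (s * n)` read as the pair `(⌊i / n⌋, i mod n)`, the first entry as a
symbol of `F`. -/
noncomputable def finMulEquivProd (F : Type) [Fintype F] (n : ℕ) :
    Fin (Fintype.card F * n) ≃ F × Fin n :=
  finProdFinEquiv.symm.trans ((Fintype.equivFin F).symm.prodCongr (Equiv.refl _))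

@[simp]
theorem finMulEquivProd_symm_apply_val {F : Type} [Fintype F] {n : ℕ} (p : F × Fin n) :
    ((finMulEquivProd F n).symm p : ℕ) = p.2 + n * Fintype.equivFin F p.1 := by
  simp [finMulEquivProd]

section Resolvable

variable {F : Type} [Field F] [Fintype F] [DecidableEq F] {n m a : ℕ}

theorem IsROA.isBalanced {M : Fin n → Fin m → F} (hM : IsROA M a) (l : Fin m) :
    IsBalanced fun r => M r l := by
  intro x
  obtain ⟨t, ht⟩ := hM.2.1
  rcases Nat.eq_zero_or_pos a with rfl | ha
  · obtain rfl : n = 0 := by simpa using ht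
    simp
  have hb : 0 < a * Fintype.card F := Nat.mul_pos ha Fintype.card_pos
  have hblock : ∀ r ∈ ({r | M r l = x} : Finset (Fin n)),
      (r : ℕ) / (a * Fintype.card F) ∈ range t := fun r _ =>
    mem_range.mpr (Nat.div_lt_of_lt_mul (ht ▸ r.isLt))
  rw [card_eq_sum_card_fiberwise hblock, Fintype.card_fin]
  have hcount : ∀ k ∈ range t,
      #(({r | M r l = x} : Finset (Fin n)).filter
        fun r : Fin n => (r : ℕ) / (a * Fintype.card F) = k) = a := by
    intro k hk
    rw [filter_filter]
    simpa only [and_comm] using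
      hM.2.2 k l x (ht ▸ mul_comm t _ ▸ Nat.mul_le_mul_right _ (mem_range.mp hk))
  rw [sum_congr rfl hcount, sum_const, card_range, smul_eq_mul, ht]
  ring

/-- Copy `u` of `M` occupies the consecutive rows `u n, …, u n + n - 1`, so each resolution block
of the result lies inside one copy. -/
noncomputable def kronSumMulTable (M : Fin n → Fin m → F) :
    Fin (Fintype.card F * n) → Fin (Fintype.card F * m) → F :=
  fun i j => kronSum M (· * ·) (finMulEquivProd F n i) (finMulEquivProd F m j)

theorem IsROA.kronSumMulTable {M : Fin n → Fin m → F} (hM : IsROA M a) :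
    IsROA (kronSumMulTable M) a := by
  refine ⟨(hM.1.kronSum hM.isBalanced isDiffScheme_mul).comp_equiv _ _,
    hM.2.1.mul_left _, fun k j x hk => ?_⟩
  obtain ⟨t, ht⟩ := hM.2.1
  rcases Nat.eq_zero_or_pos a with rfl | ha
  · obtain rfl : n = 0 := by simpa using ht
    simp
  set b := a * Fintype.card F
  have hb : 0 < b := Nat.mul_pos ha Fintype.card_pos
  have hkt : k < t * Fintype.card F := by
    rw [ht] at hk
    nlinarith
  have ht0 : 0 < t := Nat.pos_of_mul_pos_right (Nat.zero_lt_of_lt hkt)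
  set u₀ : F := (Fintype.equivFin F).symm ⟨k / t, Nat.div_lt_of_lt_mul hkt⟩
  set q := finMulEquivProd F m j
  have hblock : (k % t + 1) * b ≤ n := by
    rw [ht, mul_comm b]
    exact Nat.mul_le_mul_right _ (Nat.mod_lt k ht0)
  have hfibre : #{i : Fin _ | (i : ℕ) / b = k ∧ _root_.kronSumMulTable M i j = x}
      = #(({u₀} : Finset F) ×ˢ
          univ.filter fun r : Fin n => (r : ℕ) / b = k % t ∧ M r q.2 = x - u₀ * q.1) := by
    refine card_equiv (finMulEquivProd F n) fun i => ?_
    obtain ⟨⟨u, r⟩, rfl⟩ := (finMulEquivProd F n).symm.surjective i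
    rw [mem_filter, mem_product, mem_filter, Equiv.apply_symm_apply,
      finMulEquivProd_symm_apply_val, Nat.add_mul_div_eq_iff hb ht r.isLt]
    simp only [_root_.kronSumMulTable, kronSum, Equiv.apply_symm_apply, mem_univ, true_and,
      mem_singleton]
    have hu : (Fintype.equivFin F u : ℕ) = k / t ↔ u = u₀ := by
      rw [Equiv.eq_symm_apply, Fin.ext_iff]
    rw [hu, and_assoc, eq_sub_iff_add_eq]
    exact and_congr_right fun h => by rw [h]
  rw [hfibre, card_product, card_singleton, one_mul]
  exact hM.2.2 (k % t) q.2 (x - u₀ * q.1) hblock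

end Resolvable

theorem statement17_general {F : Type} [Field F] [Fintype F] [DecidableEq F]
    {n2 m2 a : ℕ}
    (hm2 : m2 * (a * Fintype.card F) * (Fintype.card F - 1)
      = n2 * (a * Fintype.card F - 1))
    (h : ∃ M : Fin n2 → Fin m2 → F, IsROA M a)
    (k : ℕ) :
    ∃ m : ℕ, m * (a * Fintype.card F) * (Fintype.card F - 1)
        = n2 * Fintype.card F ^ k * (a * Fintype.card F - 1) ∧
      ∃ M : Fin (n2 * Fintype.card F ^ k) → Fin m → F, IsROA M a := by
  have hpow : ∀ j : ℕ,
      ∃ M : Fin (n2 * Fintype.card F ^ j) → Fin (m2 * Fintype.card F ^ j) → F, IsROA M a := by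
    intro j
    induction j with
    | zero => rwa [pow_zero, mul_one, mul_one]
    | succ j ih =>
      obtain ⟨M, hM⟩ := ih
      rw [pow_succ', mul_left_comm n2, mul_left_comm m2]
      exact ⟨_, hM.kronSumMulTable⟩
  refine ⟨m2 * Fintype.card F ^ k, ?_, hpow k⟩
  calc m2 * Fintype.card F ^ k * (a * Fintype.card F) * (Fintype.card F - 1)
      = m2 * (a * Fintype.card F) * (Fintype.card F - 1) * Fintype.card F ^ k := by ring
    _ = n2 * Fintype.card F ^ k * (a * Fintype.card F - 1) := by rw [hm2]; ring

/-- Proposition 6: write `s = Fintype.card F`.  If there exists an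
`ROA(n₂, m₂, s, 2; a)` whose number of columns attains the upper bound
`m₂ = n₂(1 − 1/(as))/(s−1)` (expressed multiplicatively as
`m₂·as·(s−1) = n₂·(as−1)`), then for every `k ≥ 1` there exists an
`ROA(n₂·s^k, m, s, 2; a)` with `m = n₂·s^k·(1 − 1/(as))/(s−1)` (i.e.
`m·as·(s−1) = n₂·s^k·(as−1)`). -/
theorem statement17 {F : Type} [Field F] [Fintype F] [DecidableEq F]
    {n2 m2 a : ℕ} (ha : 0 < a)
    (hm2 : m2 * (a * Fintype.card F) * (Fintype.card F - 1)
      = n2 * (a * Fintype.card F - 1))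
    (h : ∃ M : Fin n2 → Fin m2 → F, IsROA M a)
    (k : ℕ) (hk : 0 < k) :
    ∃ m : ℕ, m * (a * Fintype.card F) * (Fintype.card F - 1)
        = n2 * Fintype.card F ^ k * (a * Fintype.card F - 1) ∧
      ∃ M : Fin (n2 * Fintype.card F ^ k) → Fin m → F, IsROA M a :=
  statement17_general hm2 h k
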